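/- A locally nilpotent Lie ring satisfying the chain condition on centralizers is solvable. -/

import Mathlib

/-- The centralizer of a subset of a Lie ring. -/
def setCent {L : Type*} [LieRing L] (X : Set L) : Set L :=
  {y | ∀ x ∈ X, ⁅y, x⁆ = 0}

/-- A Lie ring is `M_c` if it has no infinite strictly descending and no
infinite strictly ascending chain of centralizers. -/
def IsMc (L : Type*) [LieRing L] : Prop :=
  (¬ ∃ f : ℕ → Set L, (∀ n, ∃ X : Set L, f n = setCent X) ∧ ∀ n, f (n + 1) ⊂ f n) ∧
  (¬ ∃ f : ℕ → Set L, (∀ n, ∃ X : Set L, f n = setCent X) ∧ ∀ n, f n ⊂ f (n + 1))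

open LieAlgebra LieSubmodule LieModule

section Aux

variable {L : Type*} [LieRing L]

lemma setCent_anti {X Y : Set L} (h : X ⊆ Y) : setCent Y ⊆ setCent X :=
  fun y hy x hx => hy x (h hx)

lemma exists_finset_setCent (hMc : IsMc L) (S : Set L) :
    ∃ G : Finset L, ↑G ⊆ S ∧ setCent (↑G : Set L) = setCent S := by
  classical
  by_contra hcon
  push_neg at hcon
  have step : ∀ G : Finset L, (↑G ⊆ S) →
      ∃ G' : Finset L, ↑G' ⊆ S ∧ setCent (↑G' : Set L) ⊂ setCent (↑G : Set L) := by
    intro G hG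
    have hsub : setCent S ⊆ setCent (↑G : Set L) := setCent_anti hG
    have hns : ¬ setCent (↑G : Set L) ⊆ setCent S := fun h => hcon G hG (le_antisymm h hsub)
    obtain ⟨y, hyG, hyS⟩ := Set.not_subset.mp hns
    have : ∃ x ∈ S, ⁅y, x⁆ ≠ 0 := by
      by_contra h; push_neg at h; exact hyS h
    obtain ⟨x, hxS, hxy⟩ := this
    refine ⟨insert x G, ?_, ⟨?_, ?_⟩⟩
    · rw [Finset.coe_insert]; exact Set.insert_subset hxS hG
    · intro z hz w hw
      exact hz w (by rw [Finset.coe_insert]; exact Set.mem_insert_of_mem _ hw)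
    · intro h
      have := h hyG x (by rw [Finset.coe_insert]; exact Set.mem_insert _ _)
      exact hxy this
  let g : ℕ → {G : Finset L // ↑G ⊆ S} := fun n =>
    Nat.rec ⟨∅, by simp⟩ (fun _ p => ⟨(step p.1 p.2).choose, (step p.1 p.2).choose_spec.1⟩) n
  refine hMc.1 ⟨fun n => setCent (↑(g n).1 : Set L), fun n => ⟨_, rfl⟩, fun n => ?_⟩
  exact (step (g n).1 (g n).2).choose_spec.2

lemma lie_lie_le' {M : Type*} [LieRing M] (A B C : LieIdeal ℤ M) :
    ⁅A, ⁅B, C⁆⁆ ≤ ⁅⁅A, B⁆, C⁆ ⊔ ⁅B, ⁅A, C⁆⁆ := by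
  rw [LieSubmodule.lie_le_iff]
  intro x hx m hm
  have hmem : m ∈ Submodule.span ℤ {m : M | ∃ y ∈ B, ∃ z ∈ C, ⁅y, z⁆ = m} := by
    rw [← LieSubmodule.lieIdeal_oper_eq_linear_span']; exact hm
  refine Submodule.span_induction ?_ ?_ ?_ ?_ hmem
  · rintro z ⟨y, hy, z', hz', rfl⟩
    rw [leibniz_lie x y z']
    exact add_mem (le_sup_left (α := LieSubmodule ℤ M M) (LieSubmodule.lie_mem_lie (LieSubmodule.lie_mem_lie hx hy) hz'))
      (le_sup_right (α := LieSubmodule ℤ M M) (LieSubmodule.lie_mem_lie hy (LieSubmodule.lie_mem_lie hx hz')))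
  · simp
  · intro u v _ _ hu hv; rw [lie_add]; exact add_mem hu hv
  · intro t u _ hu; rw [lie_smul]; exact Submodule.smul_mem _ t hu

lemma lcs_lie_le {M : Type*} [LieRing M] :
    ∀ j i, ⁅LieModule.lowerCentralSeries ℤ M M i, LieModule.lowerCentralSeries ℤ M M j⁆ ≤
      LieModule.lowerCentralSeries ℤ M M (i + j + 1) := by
  intro j
  induction j with
  | zero =>
    intro i
    rw [lowerCentralSeries_zero, LieSubmodule.lie_comm, ← lowerCentralSeries_succ]
  | succ j ih =>
    intro i
    calc ⁅LieModule.lowerCentralSeries ℤ M M i, LieModule.lowerCentralSeries ℤ M M (j+1)⁆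
        = ⁅LieModule.lowerCentralSeries ℤ M M i, ⁅(⊤ : LieIdeal ℤ M), LieModule.lowerCentralSeries ℤ M M j⁆⁆ := by
          rw [lowerCentralSeries_succ]
      _ ≤ ⁅⁅LieModule.lowerCentralSeries ℤ M M i, (⊤ : LieIdeal ℤ M)⁆, LieModule.lowerCentralSeries ℤ M M j⁆ ⊔
            ⁅(⊤ : LieIdeal ℤ M), ⁅LieModule.lowerCentralSeries ℤ M M i, LieModule.lowerCentralSeries ℤ M M j⁆⁆ :=
          lie_lie_le' _ _ _
      _ ≤ LieModule.lowerCentralSeries ℤ M M (i + (j+1) + 1) := by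
          apply sup_le
          · have h1 : ⁅LieModule.lowerCentralSeries ℤ M M i, (⊤ : LieIdeal ℤ M)⁆ ≤
                LieModule.lowerCentralSeries ℤ M M (i+1) := by
              rw [LieSubmodule.lie_comm, ← lowerCentralSeries_succ]
            calc ⁅⁅LieModule.lowerCentralSeries ℤ M M i, (⊤ : LieIdeal ℤ M)⁆, LieModule.lowerCentralSeries ℤ M M j⁆
                ≤ ⁅LieModule.lowerCentralSeries ℤ M M (i+1), LieModule.lowerCentralSeries ℤ M M j⁆ :=
                  LieSubmodule.mono_lie h1 le_rfl
              _ ≤ LieModule.lowerCentralSeries ℤ M M ((i+1) + j + 1) := ih _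
              _ = LieModule.lowerCentralSeries ℤ M M (i + (j+1) + 1) := by ring_nf
          · calc ⁅(⊤ : LieIdeal ℤ M), ⁅LieModule.lowerCentralSeries ℤ M M i, LieModule.lowerCentralSeries ℤ M M j⁆⁆
                ≤ ⁅(⊤ : LieIdeal ℤ M), LieModule.lowerCentralSeries ℤ M M (i + j + 1)⁆ :=
                  LieSubmodule.mono_lie le_rfl (ih _)
              _ = LieModule.lowerCentralSeries ℤ M M (i + j + 2) := (lowerCentralSeries_succ ℤ M M _).symm
              _ = LieModule.lowerCentralSeries ℤ M M (i + (j+1) + 1) := by ring_nf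

lemma exists_semicentral {M : Type*} [LieRing M] (hnil : LieModule.IsNilpotent M M)
    {a b : M} (hab : ⁅a, b⁆ ≠ 0) :
    ∃ y : M, (∀ u v : M, ⁅y, ⁅u, v⁆⁆ = 0) ∧ ∃ w : M, ⁅y, w⁆ ≠ 0 := by
  have hex : ∃ k, LieModule.lowerCentralSeries ℤ M M k = ⊥ := hnil.nilpotent_int
  classical
  set c := Nat.find hex with hc
  have hcbot : LieModule.lowerCentralSeries ℤ M M c = ⊥ := Nat.find_spec hex
  have hab1 : ⁅a, b⁆ ∈ LieModule.lowerCentralSeries ℤ M M 1 := by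
    rw [show (1:ℕ) = 0 + 1 from rfl, LieModule.lowerCentralSeries_succ]
    exact LieSubmodule.lie_mem_lie (LieSubmodule.mem_top a)
      (by rw [lowerCentralSeries_zero]; exact LieSubmodule.mem_top b)
  have h1 : LieModule.lowerCentralSeries ℤ M M 1 ≠ ⊥ := by
    intro h; rw [h, LieSubmodule.mem_bot] at hab1; exact hab hab1
  have hc2 : 2 ≤ c := by
    by_contra h
    push_neg at h
    interval_cases c
    · exact h1 (le_bot_iff.mp (hcbot ▸ antitone_lowerCentralSeries ℤ M M (by norm_num : (0:ℕ) ≤ 1)))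
    · exact h1 hcbot
  have hne : LieModule.lowerCentralSeries ℤ M M (c - 1) ≠ ⊥ := Nat.find_min hex (by omega)
  have heq : LieModule.lowerCentralSeries ℤ M M (c - 1) = ⁅(⊤ : LieIdeal ℤ M), LieModule.lowerCentralSeries ℤ M M (c - 2)⁆ := by
    rw [← LieModule.lowerCentralSeries_succ]; congr 1; omega
  rw [heq] at hne
  rw [ne_eq, LieSubmodule.lie_eq_bot_iff] at hne
  push_neg at hne
  obtain ⟨x, -, y, hy, hxy⟩ := hne
  refine ⟨y, ?_, x, ?_⟩
  · intro u v
    have huv : ⁅u, v⁆ ∈ LieModule.lowerCentralSeries ℤ M M 1 := by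
      rw [show (1:ℕ) = 0 + 1 from rfl, LieModule.lowerCentralSeries_succ]
      exact LieSubmodule.lie_mem_lie (LieSubmodule.mem_top u)
        (by rw [lowerCentralSeries_zero]; exact LieSubmodule.mem_top v)
    have : ⁅y, ⁅u, v⁆⁆ ∈ LieModule.lowerCentralSeries ℤ M M ((c-2) + 1 + 1) := lcs_lie_le 1 (c-2) (LieSubmodule.lie_mem_lie hy huv)
    rw [show (c-2) + 1 + 1 = c by omega, hcbot, LieSubmodule.mem_bot] at this
    exact this
  · rw [← lie_skew x y, neg_ne_zero] at hxy
    exact hxy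

end Aux

/-- A locally nilpotent Lie ring satisfying the chain condition on
centralizers is solvable. -/
theorem mc_locallyNilpotent_solvable {L : Type*} [LieRing L] (hMc : IsMc L)
    (hLN : ∀ s : Finset L,
      LieModule.IsNilpotent (LieSubalgebra.lieSpan ℤ L (s : Set L))
        (LieSubalgebra.lieSpan ℤ L (s : Set L))) :
    LieAlgebra.IsSolvable L := by
  classical
  by_contra hns
  have hD : ∀ n, derivedSeries ℤ L n ≠ ⊥ := fun n h => hns ⟨⟨n, h⟩⟩
  have hmono : ∀ n, derivedSeries ℤ L (n+1) ≤ derivedSeries ℤ L n := by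
    intro n
    exact derivedSeriesOfIdeal_antitone (I := (⊤ : LieIdeal ℤ L)) (Nat.le_succ n)
  -- Step 1 : stabilization of the ascending chain of centralizers
  have hstab : ∃ m, setCent ((derivedSeries ℤ L m : LieIdeal ℤ L) : Set L) =
      setCent ((derivedSeries ℤ L (m+1) : LieIdeal ℤ L) : Set L) := by
    by_contra hc
    push_neg at hc
    refine hMc.2 ⟨fun n => setCent ((derivedSeries ℤ L n : LieIdeal ℤ L) : Set L),
      fun n => ⟨_, rfl⟩, fun n => ⟨?_, ?_⟩⟩
    · exact setCent_anti (fun x hx => hmono n hx)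
    · intro h
      exact hc n (le_antisymm (setCent_anti (fun x hx => hmono n hx)) h)
  obtain ⟨m, hm⟩ := hstab
  set K : LieIdeal ℤ L := derivedSeries ℤ L m with hK
  have hKd : derivedSeries ℤ L (m+1) = ⁅K, K⁆ := by
    rw [hK]; exact derivedSeriesOfIdeal_succ ℤ L ⊤ m
  -- nonabelian witnesses
  have hKKne : ⁅K, K⁆ ≠ ⊥ := hKd ▸ hD (m+1)
  rw [ne_eq, LieSubmodule.lie_eq_bot_iff] at hKKne
  push_neg at hKKne
  obtain ⟨a, haK, b, hbK, hab⟩ := hKKne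
  -- Step 2 : finite subset with the same centralizer
  obtain ⟨G, hGsub, hGcent⟩ := exists_finset_setCent hMc
    ((derivedSeries ℤ L (m+1) : LieIdeal ℤ L) : Set L)
  -- each element of G is in the linear span of finitely many brackets of elements of K
  have hGspan : ∀ g : {x : L // x ∈ G}, ∃ T : Finset L,
      (↑T ⊆ {z : L | ∃ p ∈ K, ∃ q ∈ K, ⁅p, q⁆ = z}) ∧
      (g : L) ∈ Submodule.span ℤ (↑T : Set L) := by
    intro g
    have hg : (g : L) ∈ ⁅K, K⁆ := by
      have := hGsub g.2
      rw [hKd] at this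
      exact this
    have hg' : (g : L) ∈ Submodule.span ℤ {z : L | ∃ p ∈ K, ∃ q ∈ K, ⁅p, q⁆ = z} := by
      rw [← LieSubmodule.lieIdeal_oper_eq_linear_span']
      exact hg
    exact Submodule.mem_span_finite_of_mem_span hg'
  choose T hT1 hT2 using hGspan
  set bigT : Finset L := Finset.univ.biUnion T with hbigT
  have hbig : ∀ t : {x : L // x ∈ bigT}, ∃ p, p ∈ K ∧ ∃ q, q ∈ K ∧ ⁅p, q⁆ = (t : L) := by
    rintro ⟨t, ht⟩
    rw [hbigT, Finset.mem_biUnion] at ht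
    obtain ⟨g, -, htg⟩ := ht
    obtain ⟨p, hp, q, hq, hpq⟩ := hT1 g htg
    exact ⟨p, hp, q, hq, hpq⟩
  choose pf hpf qf hqf hpq using hbig
  set s : Finset L := insert a (insert b
    (Finset.univ.biUnion fun t : {x : L // x ∈ bigT} => ({pf t, qf t} : Finset L))) with hs
  set N : LieSubalgebra ℤ L := LieSubalgebra.lieSpan ℤ L (↑s : Set L) with hN
  have hsN : (↑s : Set L) ⊆ N := LieSubalgebra.subset_lieSpan
  have hsK : (↑s : Set L) ⊆ (K : Set L) := by
    intro z hz
    rw [hs] at hz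
    simp only [Finset.coe_insert, Set.mem_insert_iff, Finset.coe_biUnion, Finset.coe_univ,
      Set.mem_iUnion, Finset.coe_insert, Finset.coe_singleton] at hz
    rcases hz with rfl | rfl | ⟨t, -, hz⟩
    · exact haK
    · exact hbK
    · simp only [Finset.coe_insert, Finset.coe_singleton, Set.mem_insert_iff,
        Set.mem_singleton_iff] at hz
      rcases hz with rfl | rfl
      · exact hpf t
      · exact hqf t
  have hNK : (N : Set L) ⊆ (K : Set L) := by
    have : N ≤ (K : LieSubalgebra ℤ L) := by
      rw [hN, LieSubalgebra.lieSpan_le]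
      intro z hz
      exact hsK hz
    intro z hz
    exact this hz
  -- the nilpotent subalgebra N
  haveI hnil : LieModule.IsNilpotent N N := hLN s
  have haN : a ∈ N := hsN (by rw [hs]; simp)
  have hbN : b ∈ N := hsN (by rw [hs]; simp)
  have hab' : ⁅(⟨a, haN⟩ : N), (⟨b, hbN⟩ : N)⁆ ≠ 0 := by
    intro h
    apply hab
    have : ((⁅(⟨a, haN⟩ : N), (⟨b, hbN⟩ : N)⁆ : N) : L) = ⁅a, b⁆ := rfl
    rw [h] at this
    exact this.symm
  obtain ⟨y, hy1, w, hyw⟩ := exists_semicentral hnil hab'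
  have hbigTsub : (↑bigT : Set L) ⊆ {z : L | ∃ u ∈ (N : Set L), ∃ v ∈ (N : Set L), ⁅u, v⁆ = z} := by
    intro t ht
    have hpfs : pf ⟨t, ht⟩ ∈ s := by
      rw [hs]
      refine Finset.mem_insert_of_mem (Finset.mem_insert_of_mem ?_)
      rw [Finset.mem_biUnion]
      exact ⟨⟨t, ht⟩, Finset.mem_univ _, by simp⟩
    have hqfs : qf ⟨t, ht⟩ ∈ s := by
      rw [hs]
      refine Finset.mem_insert_of_mem (Finset.mem_insert_of_mem ?_)
      rw [Finset.mem_biUnion]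
      exact ⟨⟨t, ht⟩, Finset.mem_univ _, by simp⟩
    exact ⟨pf ⟨t, ht⟩, hsN hpfs, qf ⟨t, ht⟩, hsN hqfs, hpq ⟨t, ht⟩⟩
  have hyG : (y : L) ∈ setCent (↑G : Set L) := by
    intro g hg
    have hsub1 : (↑(T ⟨g, hg⟩) : Set L) ⊆ (↑bigT : Set L) := by
      rw [hbigT]
      exact_mod_cast Finset.coe_subset.mpr (Finset.subset_biUnion_of_mem T (Finset.mem_univ ⟨g, hg⟩))
    have h1 : g ∈ Submodule.span ℤ {z : L | ∃ u ∈ (N : Set L), ∃ v ∈ (N : Set L), ⁅u, v⁆ = z} :=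
      Submodule.span_mono (hsub1.trans hbigTsub) (hT2 ⟨g, hg⟩)
    refine Submodule.span_induction (p := fun z _ => ⁅(y : L), z⁆ = 0) ?_ ?_ ?_ ?_ h1
    · rintro z ⟨u, hu, v, hv, rfl⟩
      have h2 := hy1 ⟨u, hu⟩ ⟨v, hv⟩
      have h3 : ((⁅y, ⁅(⟨u, hu⟩ : N), (⟨v, hv⟩ : N)⁆⁆ : N) : L) = ⁅(y : L), ⁅u, v⁆⁆ := by
        rw [LieSubalgebra.coe_bracket, LieSubalgebra.coe_bracket]
      rw [← h3, h2, ZeroMemClass.coe_zero]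
    · exact lie_zero _
    · intro u v _ _ hu hv; rw [lie_add, hu, hv, add_zero]
    · intro t u _ hu; rw [lie_smul, hu, smul_zero]
  have hyK : (y : L) ∈ setCent ((K : LieIdeal ℤ L) : Set L) := by
    rw [hm, ← hGcent]; exact hyG
  apply hyw
  have h0 : ⁅(y : L), (w : L)⁆ = 0 := hyK (w : L) (hNK w.2)
  have h4 : ((⁅y, w⁆ : N) : L) = (0 : L) := by
    rw [LieSubalgebra.coe_bracket]; exact h0
  exact Subtype.ext (by rw [h4]; rfl)
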